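/- Let u₀ ∈ H¹(G;ℝ²) be a weak solution of div(ε(u₀) − V) = 0 in G with natural (Neumann) boundary condition (ε(u₀) − V)ν = 0 on ∂G away from corners, where G = (-1/2,1/2)² and V ∈ L²(G;ℝ^{2×2}_{sym}). Define V* and u₀* on G* = (-1/2,3/2)² by even reflection across the lines {x = 1/2} and then {y = 1/2}. Then u₀* ∈ H¹(G*;ℝ²), is G*-periodic, and is a weak solution of the periodic Euler–Lagrange equation ∫_{G*} ε(φ) : (ε(u₀*) − V*) dx = 0 for all G*-periodic φ ∈ H¹(G*;ℝ²). -/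

import Mathlib

open MeasureTheory Matrix

noncomputable section

def I2 : Set ℝ := Set.Ioo (-(1:ℝ)/2) (1/2)

/-- The square `G = (-1/2,1/2)²`. -/
def G : Set (ℝ × ℝ) := I2 ×ˢ I2

/-- The doubled square `G* = (-1/2,3/2)²`. -/
def Gstar : Set (ℝ × ℝ) := Set.Ioo (-(1:ℝ)/2) (3/2) ×ˢ Set.Ioo (-(1:ℝ)/2) (3/2)

/-- Reflection of a coordinate in `(-1/2,3/2)` across `1/2` back into `(-1/2,1/2)`. -/
def ρ (t : ℝ) : ℝ := if t < 1/2 then t else 1 - t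

/-- Sign attached to the reflection. -/
def sgn (t : ℝ) : ℝ := if t < 1/2 then 1 else -1

def Du (u : ℝ × ℝ → ℝ × ℝ) (x : ℝ × ℝ) : Matrix (Fin 2) (Fin 2) ℝ :=
  !![(fderiv ℝ u x (1, 0)).1, (fderiv ℝ u x (0, 1)).1;
     (fderiv ℝ u x (1, 0)).2, (fderiv ℝ u x (0, 1)).2]

/-- Symmetrized gradient `ε(u)`. -/
def eps (u : ℝ × ℝ → ℝ × ℝ) (x : ℝ × ℝ) : Matrix (Fin 2) (Fin 2) ℝ :=
  Matrix.of fun i j => (Du u x i j + Du u x j i) / 2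

/-- Frobenius inner product of 2×2 matrices. -/
def mdot (A B : Matrix (Fin 2) (Fin 2) ℝ) : ℝ := ∑ i, ∑ j, A i j * B i j

def frob (A : Matrix (Fin 2) (Fin 2) ℝ) : ℝ := ∑ i, ∑ j, (A i j) ^ 2

def esq (v : ℝ × ℝ) : ℝ := v.1 ^ 2 + v.2 ^ 2

/-- Reflected displacement `u₀*` on `G*`. -/
def ustar (u : ℝ × ℝ → ℝ × ℝ) (p : ℝ × ℝ) : ℝ × ℝ :=
  (sgn p.1 * (u (ρ p.1, ρ p.2)).1, sgn p.2 * (u (ρ p.1, ρ p.2)).2)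

/-- Reflected strain field `V*` on `G*` (diagonal entries reflected evenly, off-diagonal
entries picking up the sign of the reflection). -/
def Vstar (V : ℝ × ℝ → Matrix (Fin 2) (Fin 2) ℝ) (p : ℝ × ℝ) : Matrix (Fin 2) (Fin 2) ℝ :=
  !![V (ρ p.1, ρ p.2) 0 0, sgn p.1 * sgn p.2 * V (ρ p.1, ρ p.2) 0 1;
     sgn p.1 * sgn p.2 * V (ρ p.1, ρ p.2) 1 0, V (ρ p.1, ρ p.2) 1 1]

/-! auxiliary reflection machinery -/

def OKae (a e : ℝ) : Prop := (a = 0 ∧ e = 1) ∨ (a = 1 ∧ e = -1)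

def Tm (a₁ e₁ a₂ e₂ : ℝ) (p : ℝ × ℝ) : ℝ × ℝ := (a₁ + e₁ * p.1, a₂ + e₂ * p.2)

def Rm (a₁ e₁ a₂ e₂ : ℝ) (u : ℝ × ℝ → ℝ × ℝ) (p : ℝ × ℝ) : ℝ × ℝ :=
  (e₁ * (u (Tm a₁ e₁ a₂ e₂ p)).1, e₂ * (u (Tm a₁ e₁ a₂ e₂ p)).2)

lemma OKae.ee {a e : ℝ} (h : OKae a e) : e * e = 1 := by
  rcases h with ⟨_, h⟩ | ⟨_, h⟩ <;> rw [h] <;> norm_num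

lemma OKae.invol {a e : ℝ} (h : OKae a e) (t : ℝ) : a + e * (a + e * t) = t := by
  rcases h with ⟨ha, he⟩ | ⟨ha, he⟩ <;> rw [ha, he] <;> ring

lemma OKae.rho {a e t : ℝ} (h : OKae a e) (ht : t ∈ I2) :
    ρ (a + e * t) = t ∧ sgn (a + e * t) = e := by
  obtain ⟨ht1, ht2⟩ := ht
  rcases h with ⟨ha, he⟩ | ⟨ha, he⟩ <;> subst ha <;> subst he
  · rw [show (0:ℝ) + 1 * t = t by ring]
    rw [ρ, sgn, if_pos ht2, if_pos ht2]
    exact ⟨rfl, rfl⟩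
  · rw [show (1:ℝ) + -1 * t = 1 - t by ring]
    have hlt : ¬ (1 - t < 1/2) := by intro hh; linarith
    rw [ρ, sgn, if_neg hlt, if_neg hlt]
    constructor <;> ring

lemma OKae.rho' {a e s : ℝ} (h : OKae a e) (hs : a + e * s ∈ I2) :
    ρ s = a + e * s ∧ sgn s = e := by
  have h2 := h.rho hs
  rwa [h.invol s] at h2

lemma Tm_invol {a₁ e₁ a₂ e₂ : ℝ} (h₁ : OKae a₁ e₁) (h₂ : OKae a₂ e₂) (p : ℝ × ℝ) :
    Tm a₁ e₁ a₂ e₂ (Tm a₁ e₁ a₂ e₂ p) = p := by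
  simp only [Tm]
  exact Prod.ext (h₁.invol p.1) (h₂.invol p.2)

lemma Tm_continuous (a₁ e₁ a₂ e₂ : ℝ) : Continuous (Tm a₁ e₁ a₂ e₂) := by
  unfold Tm; fun_prop

lemma OKae.mp1 {a e : ℝ} (h : OKae a e) : MeasurePreserving (fun t : ℝ => a + e * t) volume volume := by
  rcases h with ⟨ha, he⟩ | ⟨ha, he⟩ <;> subst ha <;> subst he
  · convert MeasurePreserving.id (volume : Measure ℝ) using 1; funext t; simp
  · have := (measurePreserving_add_left (volume : Measure ℝ) 1).comp
      (Measure.measurePreserving_neg (volume : Measure ℝ))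
    convert this using 1
    funext t
    show (1:ℝ) + -1 * t = 1 + -t
    ring

lemma Tm_mp {a₁ e₁ a₂ e₂ : ℝ} (h₁ : OKae a₁ e₁) (h₂ : OKae a₂ e₂) :
    MeasurePreserving (Tm a₁ e₁ a₂ e₂) volume volume := by
  have h := (h₁.mp1).prod (h₂.mp1)
  rw [← Measure.volume_eq_prod] at h
  exact h

def Tequiv {a₁ e₁ a₂ e₂ : ℝ} (h₁ : OKae a₁ e₁) (h₂ : OKae a₂ e₂) : ℝ × ℝ ≃ᵐ ℝ × ℝ where
  toFun := Tm a₁ e₁ a₂ e₂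
  invFun := Tm a₁ e₁ a₂ e₂
  left_inv := Tm_invol h₁ h₂
  right_inv := Tm_invol h₁ h₂
  measurable_toFun := (Tm_continuous a₁ e₁ a₂ e₂).measurable
  measurable_invFun := (Tm_continuous a₁ e₁ a₂ e₂).measurable

lemma measurableSet_I2 : MeasurableSet I2 := measurableSet_Ioo
lemma measurableSet_G : MeasurableSet G := measurableSet_I2.prod measurableSet_I2

lemma Q_eq_preimage {a₁ e₁ a₂ e₂ : ℝ} {J₁ J₂ : Set ℝ}
    (hJ₁ : ∀ t, t ∈ J₁ ↔ a₁ + e₁ * t ∈ I2) (hJ₂ : ∀ t, t ∈ J₂ ↔ a₂ + e₂ * t ∈ I2) :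
    J₁ ×ˢ J₂ = Tm a₁ e₁ a₂ e₂ ⁻¹' G := by
  ext p
  simp only [Set.mem_prod, Set.mem_preimage, G, Tm, hJ₁, hJ₂]

lemma restrict_Q_eq {a₁ e₁ a₂ e₂ : ℝ} (h₁ : OKae a₁ e₁) (h₂ : OKae a₂ e₂) {J₁ J₂ : Set ℝ}
    (hJ₁ : ∀ t, t ∈ J₁ ↔ a₁ + e₁ * t ∈ I2) (hJ₂ : ∀ t, t ∈ J₂ ↔ a₂ + e₂ * t ∈ I2) :
    (volume : Measure (ℝ × ℝ)).restrict (J₁ ×ˢ J₂) =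
      Measure.map (Tm a₁ e₁ a₂ e₂) ((volume : Measure (ℝ × ℝ)).restrict G) := by
  have hmeas : Measurable (Tm a₁ e₁ a₂ e₂) := (Tm_continuous a₁ e₁ a₂ e₂).measurable
  have hmap : Measure.map (Tm a₁ e₁ a₂ e₂) (volume : Measure (ℝ × ℝ)) = volume :=
    (Tm_mp h₁ h₂).map_eq
  have hpre : Tm a₁ e₁ a₂ e₂ ⁻¹' (Tm a₁ e₁ a₂ e₂ ⁻¹' G) = G := by
    rw [← Set.preimage_comp]
    have : Tm a₁ e₁ a₂ e₂ ∘ Tm a₁ e₁ a₂ e₂ = id := funext (Tm_invol h₁ h₂)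
    rw [this, Set.preimage_id]
  have hQmeas : MeasurableSet (Tm a₁ e₁ a₂ e₂ ⁻¹' G) := hmeas measurableSet_G
  rw [Q_eq_preimage hJ₁ hJ₂, ← hmap, Measure.restrict_map hmeas hQmeas, hmap, hpre]

lemma setIntegral_Q {a₁ e₁ a₂ e₂ : ℝ} (h₁ : OKae a₁ e₁) (h₂ : OKae a₂ e₂) {J₁ J₂ : Set ℝ}
    (hJ₁ : ∀ t, t ∈ J₁ ↔ a₁ + e₁ * t ∈ I2) (hJ₂ : ∀ t, t ∈ J₂ ↔ a₂ + e₂ * t ∈ I2)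
    (f : ℝ × ℝ → ℝ) :
    (∫ p in J₁ ×ˢ J₂, f p) = ∫ x in G, f (Tm a₁ e₁ a₂ e₂ x) := by
  rw [restrict_Q_eq h₁ h₂ hJ₁ hJ₂,
    show Tm a₁ e₁ a₂ e₂ = ⇑(Tequiv h₁ h₂) from rfl]
  exact integral_map_equiv (Tequiv h₁ h₂) f

lemma integrableOn_Q_iff {a₁ e₁ a₂ e₂ : ℝ} (h₁ : OKae a₁ e₁) (h₂ : OKae a₂ e₂) {J₁ J₂ : Set ℝ}
    (hJ₁ : ∀ t, t ∈ J₁ ↔ a₁ + e₁ * t ∈ I2) (hJ₂ : ∀ t, t ∈ J₂ ↔ a₂ + e₂ * t ∈ I2)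
    (f : ℝ × ℝ → ℝ) :
    IntegrableOn f (J₁ ×ˢ J₂) volume ↔
      IntegrableOn (fun x => f (Tm a₁ e₁ a₂ e₂ x)) G volume := by
  rw [IntegrableOn, restrict_Q_eq h₁ h₂ hJ₁ hJ₂,
    show Tm a₁ e₁ a₂ e₂ = ⇑(Tequiv h₁ h₂) from rfl,
    integrable_map_equiv (Tequiv h₁ h₂) f]
  rfl
def Sl (e₁ e₂ : ℝ) : (ℝ × ℝ) →L[ℝ] (ℝ × ℝ) :=
  (e₁ • ContinuousLinearMap.fst ℝ ℝ ℝ).prod (e₂ • ContinuousLinearMap.snd ℝ ℝ ℝ)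

@[simp] lemma Sl_apply (e₁ e₂ : ℝ) (v : ℝ × ℝ) : Sl e₁ e₂ v = (e₁ * v.1, e₂ * v.2) := rfl

lemma Tm_hasFDerivAt (a₁ e₁ a₂ e₂ : ℝ) (p : ℝ × ℝ) :
    HasFDerivAt (Tm a₁ e₁ a₂ e₂) (Sl e₁ e₂) p := by
  have h : HasFDerivAt (fun q : ℝ × ℝ => ((a₁, a₂) : ℝ × ℝ) + Sl e₁ e₂ q) (Sl e₁ e₂) p := by
    exact ((Sl e₁ e₂).hasFDerivAt (x := p)).const_add ((a₁, a₂) : ℝ × ℝ)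
  have he : Tm a₁ e₁ a₂ e₂ = fun q : ℝ × ℝ => ((a₁, a₂) : ℝ × ℝ) + Sl e₁ e₂ q := by
    funext q; simp [Tm, Prod.ext_iff]
  rw [he]; exact h

lemma Rm_hasFDerivAt {a₁ e₁ a₂ e₂ : ℝ} {u : ℝ × ℝ → ℝ × ℝ} {p : ℝ × ℝ}
    (hu : DifferentiableAt ℝ u (Tm a₁ e₁ a₂ e₂ p)) :
    HasFDerivAt (Rm a₁ e₁ a₂ e₂ u)
      ((Sl e₁ e₂).comp ((fderiv ℝ u (Tm a₁ e₁ a₂ e₂ p)).comp (Sl e₁ e₂))) p := by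
  have h1 : HasFDerivAt (fun q => u (Tm a₁ e₁ a₂ e₂ q))
      ((fderiv ℝ u (Tm a₁ e₁ a₂ e₂ p)).comp (Sl e₁ e₂)) p :=
    hu.hasFDerivAt.comp p (Tm_hasFDerivAt a₁ e₁ a₂ e₂ p)
  have h2 := ((Sl e₁ e₂).hasFDerivAt (x := u (Tm a₁ e₁ a₂ e₂ p))).comp p h1
  have he : Rm a₁ e₁ a₂ e₂ u = (fun v => Sl e₁ e₂ v) ∘ (fun q => u (Tm a₁ e₁ a₂ e₂ q)) := by
    funext q; simp [Rm, Function.comp]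
  rw [he]; exact h2

lemma Du_Rm {a₁ e₁ a₂ e₂ : ℝ} (h₁ : OKae a₁ e₁) (h₂ : OKae a₂ e₂)
    {u : ℝ × ℝ → ℝ × ℝ} {p : ℝ × ℝ} (hu : DifferentiableAt ℝ u (Tm a₁ e₁ a₂ e₂ p)) :
    Du (Rm a₁ e₁ a₂ e₂ u) p =
      !![Du u (Tm a₁ e₁ a₂ e₂ p) 0 0, e₁ * e₂ * Du u (Tm a₁ e₁ a₂ e₂ p) 0 1;
         e₁ * e₂ * Du u (Tm a₁ e₁ a₂ e₂ p) 1 0, Du u (Tm a₁ e₁ a₂ e₂ p) 1 1] := by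
  have hf := (Rm_hasFDerivAt hu).fderiv
  have he1 := h₁.ee
  have he2 := h₂.ee
  set D := fderiv ℝ u (Tm a₁ e₁ a₂ e₂ p) with hD
  have key : ∀ (c d : ℝ) (v : ℝ × ℝ), ((e₁ * c, e₂ * d) : ℝ × ℝ) = v →
      ((Sl e₁ e₂).comp (D.comp (Sl e₁ e₂))) (c, d) = (e₁ * (D v).1, e₂ * (D v).2) := by
    intro c d v hv
    simp only [ContinuousLinearMap.comp_apply, Sl_apply]
    rw [hv]
  have h10 : ((Sl e₁ e₂).comp (D.comp (Sl e₁ e₂))) (1, 0) =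
      ((D (1,0)).1, e₁ * e₂ * (D (1,0)).2) := by
    rw [key 1 0 (e₁ • ((1:ℝ),(0:ℝ))) (by simp [Prod.ext_iff]), D.map_smul]
    refine Prod.ext ?_ ?_ <;> simp only [Prod.smul_fst, Prod.smul_snd, smul_eq_mul]
    · linear_combination (D (1,0)).1 * he1
    · ring
  have h01 : ((Sl e₁ e₂).comp (D.comp (Sl e₁ e₂))) (0, 1) =
      (e₁ * e₂ * (D (0,1)).1, (D (0,1)).2) := by
    rw [key 0 1 (e₂ • ((0:ℝ),(1:ℝ))) (by simp [Prod.ext_iff]), D.map_smul]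
    refine Prod.ext ?_ ?_ <;> simp only [Prod.smul_fst, Prod.smul_snd, smul_eq_mul]
    · ring
    · linear_combination (D (0,1)).2 * he2
  show (!![(fderiv ℝ (Rm a₁ e₁ a₂ e₂ u) p (1, 0)).1, (fderiv ℝ (Rm a₁ e₁ a₂ e₂ u) p (0, 1)).1;
     (fderiv ℝ (Rm a₁ e₁ a₂ e₂ u) p (1, 0)).2, (fderiv ℝ (Rm a₁ e₁ a₂ e₂ u) p (0, 1)).2]) = _
  rw [hf, h10, h01]
  show (!![(D (1,0)).1, e₁ * e₂ * (D (0,1)).1; e₁ * e₂ * (D (1,0)).2, (D (0,1)).2]) = _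
  rfl
lemma Tm_mem_Q {a₁ e₁ a₂ e₂ : ℝ} (h₁ : OKae a₁ e₁) (h₂ : OKae a₂ e₂) {J₁ J₂ : Set ℝ}
    (hJ₁ : ∀ t, t ∈ J₁ ↔ a₁ + e₁ * t ∈ I2) (hJ₂ : ∀ t, t ∈ J₂ ↔ a₂ + e₂ * t ∈ I2)
    {x : ℝ × ℝ} (hx : x ∈ G) : Tm a₁ e₁ a₂ e₂ x ∈ J₁ ×ˢ J₂ := by
  rw [Q_eq_preimage hJ₁ hJ₂]
  show Tm a₁ e₁ a₂ e₂ (Tm a₁ e₁ a₂ e₂ x) ∈ G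
  rwa [Tm_invol h₁ h₂]

lemma ustar_eq_Rm {a₁ e₁ a₂ e₂ : ℝ} (h₁ : OKae a₁ e₁) (h₂ : OKae a₂ e₂) {J₁ J₂ : Set ℝ}
    (hJ₁ : ∀ t, t ∈ J₁ ↔ a₁ + e₁ * t ∈ I2) (hJ₂ : ∀ t, t ∈ J₂ ↔ a₂ + e₂ * t ∈ I2)
    (u : ℝ × ℝ → ℝ × ℝ) {p : ℝ × ℝ} (hp : p ∈ J₁ ×ˢ J₂) :
    ustar u p = Rm a₁ e₁ a₂ e₂ u p := by
  obtain ⟨hp1, hp2⟩ := hp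
  obtain ⟨hr1, hs1⟩ := h₁.rho' ((hJ₁ p.1).mp hp1)
  obtain ⟨hr2, hs2⟩ := h₂.rho' ((hJ₂ p.2).mp hp2)
  simp only [ustar, Rm, Tm, hr1, hr2, hs1, hs2]

/-- reflection data at a reflected point of `G` -/
lemma rho_sgn_Tm {a₁ e₁ a₂ e₂ : ℝ} (h₁ : OKae a₁ e₁) (h₂ : OKae a₂ e₂)
    {x : ℝ × ℝ} (hx : x ∈ G) :
    ρ (Tm a₁ e₁ a₂ e₂ x).1 = x.1 ∧ ρ (Tm a₁ e₁ a₂ e₂ x).2 = x.2 ∧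
      sgn (Tm a₁ e₁ a₂ e₂ x).1 = e₁ ∧ sgn (Tm a₁ e₁ a₂ e₂ x).2 = e₂ := by
  obtain ⟨hx1, hx2⟩ := hx
  obtain ⟨hr1, hs1⟩ := h₁.rho hx1
  obtain ⟨hr2, hs2⟩ := h₂.rho hx2
  exact ⟨hr1, hr2, hs1, hs2⟩

lemma Du_eq_on_Q {a₁ e₁ a₂ e₂ : ℝ} (h₁ : OKae a₁ e₁) (h₂ : OKae a₂ e₂) {J₁ J₂ : Set ℝ}
    (hJ₁ : ∀ t, t ∈ J₁ ↔ a₁ + e₁ * t ∈ I2) (hJ₂ : ∀ t, t ∈ J₂ ↔ a₂ + e₂ * t ∈ I2)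
    (hJo₁ : IsOpen J₁) (hJo₂ : IsOpen J₂)
    {u v : ℝ × ℝ → ℝ × ℝ} (hv : Set.EqOn v (Rm a₁ e₁ a₂ e₂ u) (J₁ ×ˢ J₂))
    {x : ℝ × ℝ} (hx : x ∈ G) (hu : DifferentiableAt ℝ u x) :
    Du v (Tm a₁ e₁ a₂ e₂ x) =
      !![Du u x 0 0, e₁ * e₂ * Du u x 0 1;
         e₁ * e₂ * Du u x 1 0, Du u x 1 1] := by
  have hmem : Tm a₁ e₁ a₂ e₂ x ∈ J₁ ×ˢ J₂ := Tm_mem_Q h₁ h₂ hJ₁ hJ₂ hx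
  have hopen : IsOpen (J₁ ×ˢ J₂) := hJo₁.prod hJo₂
  have hfe : fderiv ℝ v (Tm a₁ e₁ a₂ e₂ x) = fderiv ℝ (Rm a₁ e₁ a₂ e₂ u) (Tm a₁ e₁ a₂ e₂ x) :=
    Filter.EventuallyEq.fderiv_eq (Filter.eventuallyEq_of_mem (hopen.mem_nhds hmem) hv)
  have hu' : DifferentiableAt ℝ u (Tm a₁ e₁ a₂ e₂ (Tm a₁ e₁ a₂ e₂ x)) := by
    rwa [Tm_invol h₁ h₂]
  have h2 := Du_Rm h₁ h₂ hu'
  rw [Tm_invol h₁ h₂] at h2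
  have hDu : Du v (Tm a₁ e₁ a₂ e₂ x) = Du (Rm a₁ e₁ a₂ e₂ u) (Tm a₁ e₁ a₂ e₂ x) := by
    unfold Du; rw [hfe]
  rw [hDu, h2]

lemma Tm_contDiff (a₁ e₁ a₂ e₂ : ℝ) : ContDiff ℝ (⊤ : ℕ∞) (Tm a₁ e₁ a₂ e₂) := by
  unfold Tm
  exact ContDiff.prodMk (contDiff_const.add (contDiff_const.mul contDiff_fst))
    (contDiff_const.add (contDiff_const.mul contDiff_snd))

lemma Rm_contDiff {a₁ e₁ a₂ e₂ : ℝ} {φ : ℝ × ℝ → ℝ × ℝ} (hφ : ContDiff ℝ (⊤ : ℕ∞) φ) :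
    ContDiff ℝ (⊤ : ℕ∞) (Rm a₁ e₁ a₂ e₂ φ) := by
  unfold Rm
  have h := hφ.comp (Tm_contDiff a₁ e₁ a₂ e₂)
  exact ContDiff.prodMk (contDiff_const.mul (contDiff_fst.comp h))
    (contDiff_const.mul (contDiff_snd.comp h))
lemma esq_ustar_Tm {a₁ e₁ a₂ e₂ : ℝ} (h₁ : OKae a₁ e₁) (h₂ : OKae a₂ e₂) {J₁ J₂ : Set ℝ}
    (hJ₁ : ∀ t, t ∈ J₁ ↔ a₁ + e₁ * t ∈ I2) (hJ₂ : ∀ t, t ∈ J₂ ↔ a₂ + e₂ * t ∈ I2)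
    (u : ℝ × ℝ → ℝ × ℝ) {x : ℝ × ℝ} (hx : x ∈ G) :
    esq (ustar u (Tm a₁ e₁ a₂ e₂ x)) = esq (u x) := by
  rw [ustar_eq_Rm h₁ h₂ hJ₁ hJ₂ u (Tm_mem_Q h₁ h₂ hJ₁ hJ₂ hx)]
  simp only [Rm, Tm_invol h₁ h₂, esq]
  rcases h₁ with ⟨-, rfl⟩ | ⟨-, rfl⟩ <;> rcases h₂ with ⟨-, rfl⟩ | ⟨-, rfl⟩ <;> ring

lemma frob_Du_ustar_Tm {a₁ e₁ a₂ e₂ : ℝ} (h₁ : OKae a₁ e₁) (h₂ : OKae a₂ e₂) {J₁ J₂ : Set ℝ}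
    (hJ₁ : ∀ t, t ∈ J₁ ↔ a₁ + e₁ * t ∈ I2) (hJ₂ : ∀ t, t ∈ J₂ ↔ a₂ + e₂ * t ∈ I2)
    (hJo₁ : IsOpen J₁) (hJo₂ : IsOpen J₂)
    (u : ℝ × ℝ → ℝ × ℝ) {x : ℝ × ℝ} (hx : x ∈ G) (hu : DifferentiableAt ℝ u x) :
    frob (Du (ustar u) (Tm a₁ e₁ a₂ e₂ x)) = frob (Du u x) := by
  have hv : Set.EqOn (ustar u) (Rm a₁ e₁ a₂ e₂ u) (J₁ ×ˢ J₂) := fun p hp =>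
    ustar_eq_Rm h₁ h₂ hJ₁ hJ₂ u hp
  rw [Du_eq_on_Q h₁ h₂ hJ₁ hJ₂ hJo₁ hJo₂ hv hx hu]
  simp only [frob, Fin.sum_univ_two]
  simp
  rcases h₁ with ⟨-, rfl⟩ | ⟨-, rfl⟩ <;> rcases h₂ with ⟨-, rfl⟩ | ⟨-, rfl⟩ <;> ring

lemma integrand_eq {a₁ e₁ a₂ e₂ : ℝ} (h₁ : OKae a₁ e₁) (h₂ : OKae a₂ e₂) {J₁ J₂ : Set ℝ}
    (hJ₁ : ∀ t, t ∈ J₁ ↔ a₁ + e₁ * t ∈ I2) (hJ₂ : ∀ t, t ∈ J₂ ↔ a₂ + e₂ * t ∈ I2)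
    (hJo₁ : IsOpen J₁) (hJo₂ : IsOpen J₂)
    (u₀ w φ : ℝ × ℝ → ℝ × ℝ) (V : ℝ × ℝ → Matrix (Fin 2) (Fin 2) ℝ)
    (hv : Set.EqOn w (Rm a₁ e₁ a₂ e₂ u₀) (J₁ ×ˢ J₂))
    {x : ℝ × ℝ} (hx : x ∈ G) (hu : DifferentiableAt ℝ u₀ x) (hφ : Differentiable ℝ φ) :
    mdot (eps φ (Tm a₁ e₁ a₂ e₂ x)) (eps w (Tm a₁ e₁ a₂ e₂ x) - Vstar V (Tm a₁ e₁ a₂ e₂ x)) =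
      mdot (eps (Rm a₁ e₁ a₂ e₂ φ) x) (eps u₀ x - V x) := by
  obtain ⟨hρ1, hρ2, hs1, hs2⟩ := rho_sgn_Tm h₁ h₂ hx
  have hDw := Du_eq_on_Q h₁ h₂ hJ₁ hJ₂ hJo₁ hJo₂ hv hx hu
  have hφ' : DifferentiableAt ℝ φ (Tm a₁ e₁ a₂ e₂ x) := hφ _
  have hDφ := Du_Rm h₁ h₂ (u := φ) (p := x) (hφ _)
  have hV : Vstar V (Tm a₁ e₁ a₂ e₂ x) =
      !![V x 0 0, e₁ * e₂ * V x 0 1; e₁ * e₂ * V x 1 0, V x 1 1] := by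
    simp only [Vstar, hρ1, hρ2, hs1, hs2, Prod.mk.eta]
  simp only [mdot, eps, Matrix.sub_apply, Matrix.of_apply, Fin.sum_univ_two, hDw, hDφ, hV]
  simp
  rcases h₁ with ⟨-, rfl⟩ | ⟨-, rfl⟩ <;> rcases h₂ with ⟨-, rfl⟩ | ⟨-, rfl⟩ <;> ring
def wrap (t : ℝ) : ℝ := t - 2 * (⌊(t + 1/2) / 2⌋ : ℤ)

lemma wrap_add_two (t : ℝ) : wrap (t + 2) = wrap t := by
  unfold wrap
  have : (t + 2 + 1/2) / 2 = (t + 1/2) / 2 + 1 := by ring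
  rw [this, Int.floor_add_one]
  push_cast
  ring

lemma wrap_eq_self {t : ℝ} (h : t ∈ Set.Ioo (-(1:ℝ)/2) (3/2)) : wrap t = t := by
  obtain ⟨h1, h2⟩ := h
  unfold wrap
  have : ⌊(t + 1/2) / 2⌋ = 0 := by
    rw [Int.floor_eq_zero_iff]
    constructor
    · show (0:ℝ) ≤ (t + 1/2) / 2
      linarith
    · show (t + 1/2) / 2 < 1
      linarith
  rw [this]
  push_cast
  ring

lemma line1_null (c : ℝ) : (volume : Measure (ℝ × ℝ)) {p : ℝ × ℝ | p.1 = c} = 0 := by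
  have : {p : ℝ × ℝ | p.1 = c} = ({c} : Set ℝ) ×ˢ (Set.univ : Set ℝ) := by
    ext p
    simp only [Set.mem_setOf_eq, Set.mem_prod, Set.mem_singleton_iff, Set.mem_univ, and_true]
  rw [this, Measure.volume_eq_prod, Measure.prod_prod, Real.volume_singleton, zero_mul]

lemma line2_null (c : ℝ) : (volume : Measure (ℝ × ℝ)) {p : ℝ × ℝ | p.2 = c} = 0 := by
  have : {p : ℝ × ℝ | p.2 = c} = (Set.univ : Set ℝ) ×ˢ ({c} : Set ℝ) := by
    ext p
    simp only [Set.mem_setOf_eq, Set.mem_prod, Set.mem_singleton_iff, Set.mem_univ, true_and]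
  rw [this, Measure.volume_eq_prod, Measure.prod_prod, Real.volume_singleton, mul_zero]

lemma mdot_eps_add4 (f1 f2 f3 f4 : ℝ × ℝ → ℝ × ℝ)
    (h1 : Differentiable ℝ f1) (h2 : Differentiable ℝ f2)
    (h3 : Differentiable ℝ f3) (h4 : Differentiable ℝ f4)
    (x : ℝ × ℝ) (B : Matrix (Fin 2) (Fin 2) ℝ) :
    mdot (eps (fun y => f1 y + f2 y + f3 y + f4 y) x) B =
      mdot (eps f1 x) B + mdot (eps f2 x) B + mdot (eps f3 x) B + mdot (eps f4 x) B := by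
  have hf : fderiv ℝ (fun y => f1 y + f2 y + f3 y + f4 y) x =
      fderiv ℝ f1 x + fderiv ℝ f2 x + fderiv ℝ f3 x + fderiv ℝ f4 x :=
    ((((h1 x).hasFDerivAt.add (h2 x).hasFDerivAt).add (h3 x).hasFDerivAt).add
      (h4 x).hasFDerivAt).fderiv
  simp only [mdot, eps, Du, hf, ContinuousLinearMap.add_apply, Prod.fst_add, Prod.snd_add,
    Matrix.of_apply, Fin.sum_univ_two]
  simp
  ring

/-- Reflection of a weak solution of the Neumann problem `div(ε(u₀) − V) = 0` on `G` yields a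
`G*`-periodic `H¹` weak solution of the periodic Euler–Lagrange equation on `G*`. -/
theorem stmt17 (u₀ : ℝ × ℝ → ℝ × ℝ) (V : ℝ × ℝ → Matrix (Fin 2) (Fin 2) ℝ)
    (hu₀ : ∀ x ∈ G, DifferentiableAt ℝ u₀ x)
    (hu₀L2 : IntegrableOn (fun x => esq (u₀ x)) G volume)
    (hDuL2 : IntegrableOn (fun x => frob (Du u₀ x)) G volume)
    (hVsym : ∀ x, (V x)ᵀ = V x)
    (hVL2 : IntegrableOn (fun x => frob (V x)) G volume)
    (hEL : ∀ φ : ℝ × ℝ → ℝ × ℝ, ContDiff ℝ (⊤ : ℕ∞) φ →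
      (∫ x in G, mdot (eps φ x) (eps u₀ x - V x)) = 0) :
    IntegrableOn (fun p => esq (ustar u₀ p)) Gstar volume ∧
    IntegrableOn (fun p => frob (Du (ustar u₀) p)) Gstar volume ∧
    ∃ w : ℝ × ℝ → ℝ × ℝ,
      (∀ p ∈ Gstar, w p = ustar u₀ p) ∧
      (∀ p : ℝ × ℝ, w (p.1 + 2, p.2) = w p ∧ w (p.1, p.2 + 2) = w p) ∧
      (∀ φ : ℝ × ℝ → ℝ × ℝ, ContDiff ℝ (⊤ : ℕ∞) φ →
        (∀ p : ℝ × ℝ, φ (p.1 + 2, p.2) = φ p ∧ φ (p.1, p.2 + 2) = φ p) →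
        (∫ p in Gstar, mdot (eps φ p) (eps w p - Vstar V p)) = 0) := by
  classical
  have hO1 : OKae 0 1 := Or.inl ⟨rfl, rfl⟩
  have hO2 : OKae 1 (-1) := Or.inr ⟨rfl, rfl⟩
  have hJlo : ∀ t : ℝ, t ∈ I2 ↔ (0:ℝ) + 1 * t ∈ I2 := by
    intro t; rw [show (0:ℝ) + 1 * t = t by ring]
  have hJhi : ∀ t : ℝ, t ∈ Set.Ioo (1/2:ℝ) (3/2) ↔ (1:ℝ) + (-1) * t ∈ I2 := by
    intro t
    simp only [Set.mem_Ioo, I2]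
    constructor
    · rintro ⟨hu1, hu2⟩; constructor <;> linarith
    · rintro ⟨hu1, hu2⟩; constructor <;> linarith
  have hOlo : IsOpen I2 := isOpen_Ioo
  have hOhi : IsOpen (Set.Ioo (1/2:ℝ) (3/2)) := isOpen_Ioo
  have mI2 : MeasurableSet I2 := measurableSet_Ioo
  have mJh : MeasurableSet (Set.Ioo (1/2:ℝ) (3/2)) := measurableSet_Ioo
  have mQ1 : MeasurableSet (I2 ×ˢ I2) := mI2.prod mI2
  have mQ2 : MeasurableSet (Set.Ioo (1/2:ℝ) (3/2) ×ˢ I2) := mJh.prod mI2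
  have mQ3 : MeasurableSet (I2 ×ˢ Set.Ioo (1/2:ℝ) (3/2)) := mI2.prod mJh
  have mQ4 : MeasurableSet (Set.Ioo (1/2:ℝ) (3/2) ×ˢ Set.Ioo (1/2:ℝ) (3/2)) := mJh.prod mJh
  have hsubI2 : I2 ⊆ Set.Ioo (-(1:ℝ)/2) (3/2) := Set.Ioo_subset_Ioo le_rfl (by norm_num)
  have hsubJh : Set.Ioo (1/2:ℝ) (3/2) ⊆ Set.Ioo (-(1:ℝ)/2) (3/2) :=
    Set.Ioo_subset_Ioo (by norm_num) le_rfl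
  have hQ1sub : I2 ×ˢ I2 ⊆ Gstar := Set.prod_mono hsubI2 hsubI2
  have hQ2sub : Set.Ioo (1/2:ℝ) (3/2) ×ˢ I2 ⊆ Gstar := Set.prod_mono hsubJh hsubI2
  have hQ3sub : I2 ×ˢ Set.Ioo (1/2:ℝ) (3/2) ⊆ Gstar := Set.prod_mono hsubI2 hsubJh
  have hQ4sub : Set.Ioo (1/2:ℝ) (3/2) ×ˢ Set.Ioo (1/2:ℝ) (3/2) ⊆ Gstar :=
    Set.prod_mono hsubJh hsubJh
  -- null set
  have hN : (volume : Measure (ℝ × ℝ))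
      ({p : ℝ × ℝ | p.1 = 1/2} ∪ {p : ℝ × ℝ | p.2 = 1/2}) = 0 :=
    measure_union_null (line1_null _) (line2_null _)
  have hNint : ∀ f : ℝ × ℝ → ℝ, IntegrableOn f
      ({p : ℝ × ℝ | p.1 = 1/2} ∪ {p : ℝ × ℝ | p.2 = 1/2}) volume := by
    intro f
    unfold IntegrableOn
    rw [Measure.restrict_eq_zero.mpr hN]
    exact integrable_zero_measure
  have hcov : Gstar ⊆ ((I2 ×ˢ I2 ∪ Set.Ioo (1/2:ℝ) (3/2) ×ˢ I2) ∪
      (I2 ×ˢ Set.Ioo (1/2:ℝ) (3/2) ∪ Set.Ioo (1/2:ℝ) (3/2) ×ˢ Set.Ioo (1/2:ℝ) (3/2))) ∪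
      ({p : ℝ × ℝ | p.1 = 1/2} ∪ {p : ℝ × ℝ | p.2 = 1/2}) := by
    rintro ⟨px, py⟩ ⟨hx, hy⟩
    obtain ⟨hx1, hx2⟩ := hx
    obtain ⟨hy1, hy2⟩ := hy
    rcases lt_trichotomy px (1/2) with h1 | h1 | h1
    · rcases lt_trichotomy py (1/2) with h2 | h2 | h2
      · exact Or.inl (Or.inl (Or.inl ⟨⟨hx1, h1⟩, ⟨hy1, h2⟩⟩))
      · exact Or.inr (Or.inr h2)
      · exact Or.inl (Or.inr (Or.inl ⟨⟨hx1, h1⟩, ⟨h2, hy2⟩⟩))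
    · exact Or.inr (Or.inl h1)
    · rcases lt_trichotomy py (1/2) with h2 | h2 | h2
      · exact Or.inl (Or.inl (Or.inr ⟨⟨h1, hx2⟩, ⟨hy1, h2⟩⟩))
      · exact Or.inr (Or.inr h2)
      · exact Or.inl (Or.inr (Or.inr ⟨⟨h1, hx2⟩, ⟨h2, hy2⟩⟩))
  have hUsub : ((I2 ×ˢ I2 ∪ Set.Ioo (1/2:ℝ) (3/2) ×ˢ I2) ∪
      (I2 ×ˢ Set.Ioo (1/2:ℝ) (3/2) ∪ Set.Ioo (1/2:ℝ) (3/2) ×ˢ Set.Ioo (1/2:ℝ) (3/2)))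
      ⊆ Gstar :=
    Set.union_subset (Set.union_subset hQ1sub hQ2sub) (Set.union_subset hQ3sub hQ4sub)
  have haeeq : (Gstar : Set (ℝ × ℝ)) =ᵐ[(volume : Measure (ℝ × ℝ))]
      (((I2 ×ˢ I2 ∪ Set.Ioo (1/2:ℝ) (3/2) ×ˢ I2) ∪
      (I2 ×ˢ Set.Ioo (1/2:ℝ) (3/2) ∪ Set.Ioo (1/2:ℝ) (3/2) ×ˢ Set.Ioo (1/2:ℝ) (3/2))) : Set (ℝ × ℝ)) := by
    rw [ae_eq_set]
    constructor
    · refine measure_mono_null (fun p hp => ?_) hN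
      obtain ⟨hpG, hpU⟩ := hp
      rcases hcov hpG with h | h
      · exact absurd h hpU
      · exact h
    · have : ((I2 ×ˢ I2 ∪ Set.Ioo (1/2:ℝ) (3/2) ×ˢ I2) ∪
          (I2 ×ˢ Set.Ioo (1/2:ℝ) (3/2) ∪ Set.Ioo (1/2:ℝ) (3/2) ×ˢ Set.Ioo (1/2:ℝ) (3/2)))
          \ Gstar = ∅ := Set.diff_eq_empty.mpr hUsub
      rw [this, measure_empty]
  -- disjointness
  have hd12 : Disjoint (I2 ×ˢ I2) (Set.Ioo (1/2:ℝ) (3/2) ×ˢ I2) := by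
    rw [Set.disjoint_left]
    rintro p ⟨h1, -⟩ ⟨h3, -⟩
    exact absurd h3.1 (not_lt.mpr (le_of_lt h1.2))
  have hd34 : Disjoint (I2 ×ˢ Set.Ioo (1/2:ℝ) (3/2))
      (Set.Ioo (1/2:ℝ) (3/2) ×ˢ Set.Ioo (1/2:ℝ) (3/2)) := by
    rw [Set.disjoint_left]
    rintro p ⟨h1, -⟩ ⟨h3, -⟩
    exact absurd h3.1 (not_lt.mpr (le_of_lt h1.2))
  have hdU : Disjoint (I2 ×ˢ I2 ∪ Set.Ioo (1/2:ℝ) (3/2) ×ˢ I2)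
      (I2 ×ˢ Set.Ioo (1/2:ℝ) (3/2) ∪ Set.Ioo (1/2:ℝ) (3/2) ×ˢ Set.Ioo (1/2:ℝ) (3/2)) := by
    rw [Set.disjoint_left]
    rintro p (⟨-, h⟩ | ⟨-, h⟩) (⟨-, h'⟩ | ⟨-, h'⟩) <;>
      exact absurd h'.1 (not_lt.mpr (le_of_lt h.2))
  -- EqOn of ustar with Rm on each quadrant
  have hE1 : Set.EqOn (ustar u₀) (Rm 0 1 0 1 u₀) (I2 ×ˢ I2) :=
    fun p hp => ustar_eq_Rm hO1 hO1 hJlo hJlo u₀ hp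
  have hE2 : Set.EqOn (ustar u₀) (Rm 1 (-1) 0 1 u₀) (Set.Ioo (1/2:ℝ) (3/2) ×ˢ I2) :=
    fun p hp => ustar_eq_Rm hO2 hO1 hJhi hJlo u₀ hp
  have hE3 : Set.EqOn (ustar u₀) (Rm 0 1 1 (-1) u₀) (I2 ×ˢ Set.Ioo (1/2:ℝ) (3/2)) :=
    fun p hp => ustar_eq_Rm hO1 hO2 hJlo hJhi u₀ hp
  have hE4 : Set.EqOn (ustar u₀) (Rm 1 (-1) 1 (-1) u₀)
      (Set.Ioo (1/2:ℝ) (3/2) ×ˢ Set.Ioo (1/2:ℝ) (3/2)) :=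
    fun p hp => ustar_eq_Rm hO2 hO2 hJhi hJhi u₀ hp
  -- integrability of esq ∘ ustar
  have hesq1 : IntegrableOn (fun p => esq (ustar u₀ p)) (I2 ×ˢ I2) volume :=
    (integrableOn_Q_iff hO1 hO1 hJlo hJlo _).mpr
      (hu₀L2.congr_fun (fun x hx => (esq_ustar_Tm hO1 hO1 hJlo hJlo u₀ hx).symm) measurableSet_G)
  have hesq2 : IntegrableOn (fun p => esq (ustar u₀ p)) (Set.Ioo (1/2:ℝ) (3/2) ×ˢ I2) volume :=
    (integrableOn_Q_iff hO2 hO1 hJhi hJlo _).mpr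
      (hu₀L2.congr_fun (fun x hx => (esq_ustar_Tm hO2 hO1 hJhi hJlo u₀ hx).symm) measurableSet_G)
  have hesq3 : IntegrableOn (fun p => esq (ustar u₀ p)) (I2 ×ˢ Set.Ioo (1/2:ℝ) (3/2)) volume :=
    (integrableOn_Q_iff hO1 hO2 hJlo hJhi _).mpr
      (hu₀L2.congr_fun (fun x hx => (esq_ustar_Tm hO1 hO2 hJlo hJhi u₀ hx).symm) measurableSet_G)
  have hesq4 : IntegrableOn (fun p => esq (ustar u₀ p))
      (Set.Ioo (1/2:ℝ) (3/2) ×ˢ Set.Ioo (1/2:ℝ) (3/2)) volume :=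
    (integrableOn_Q_iff hO2 hO2 hJhi hJhi _).mpr
      (hu₀L2.congr_fun (fun x hx => (esq_ustar_Tm hO2 hO2 hJhi hJhi u₀ hx).symm) measurableSet_G)
  have hesq : IntegrableOn (fun p => esq (ustar u₀ p)) Gstar volume := by
    refine IntegrableOn.mono_set ?_ hcov
    exact (((hesq1.union hesq2).union (hesq3.union hesq4)).union (hNint _))
  -- integrability of frob ∘ Du ∘ ustar
  have hfrb1 : IntegrableOn (fun p => frob (Du (ustar u₀) p)) (I2 ×ˢ I2) volume :=
    (integrableOn_Q_iff hO1 hO1 hJlo hJlo _).mpr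
      (hDuL2.congr_fun (fun x hx =>
        (frob_Du_ustar_Tm hO1 hO1 hJlo hJlo hOlo hOlo u₀ hx (hu₀ x hx)).symm) measurableSet_G)
  have hfrb2 : IntegrableOn (fun p => frob (Du (ustar u₀) p))
      (Set.Ioo (1/2:ℝ) (3/2) ×ˢ I2) volume :=
    (integrableOn_Q_iff hO2 hO1 hJhi hJlo _).mpr
      (hDuL2.congr_fun (fun x hx =>
        (frob_Du_ustar_Tm hO2 hO1 hJhi hJlo hOhi hOlo u₀ hx (hu₀ x hx)).symm) measurableSet_G)
  have hfrb3 : IntegrableOn (fun p => frob (Du (ustar u₀) p))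
      (I2 ×ˢ Set.Ioo (1/2:ℝ) (3/2)) volume :=
    (integrableOn_Q_iff hO1 hO2 hJlo hJhi _).mpr
      (hDuL2.congr_fun (fun x hx =>
        (frob_Du_ustar_Tm hO1 hO2 hJlo hJhi hOlo hOhi u₀ hx (hu₀ x hx)).symm) measurableSet_G)
  have hfrb4 : IntegrableOn (fun p => frob (Du (ustar u₀) p))
      (Set.Ioo (1/2:ℝ) (3/2) ×ˢ Set.Ioo (1/2:ℝ) (3/2)) volume :=
    (integrableOn_Q_iff hO2 hO2 hJhi hJhi _).mpr
      (hDuL2.congr_fun (fun x hx =>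
        (frob_Du_ustar_Tm hO2 hO2 hJhi hJhi hOhi hOhi u₀ hx (hu₀ x hx)).symm) measurableSet_G)
  have hfrb : IntegrableOn (fun p => frob (Du (ustar u₀) p)) Gstar volume := by
    refine IntegrableOn.mono_set ?_ hcov
    exact (((hfrb1.union hfrb2).union (hfrb3.union hfrb4)).union (hNint _))
  refine ⟨hesq, hfrb, fun p => ustar u₀ (wrap p.1, wrap p.2), ?_, ?_, ?_⟩
  · -- w = ustar on Gstar
    rintro p ⟨h1, h2⟩
    show ustar u₀ (wrap p.1, wrap p.2) = ustar u₀ p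
    rw [wrap_eq_self h1, wrap_eq_self h2]
  · -- periodicity
    intro p
    constructor
    · show ustar u₀ (wrap (p.1 + 2), wrap p.2) = ustar u₀ (wrap p.1, wrap p.2)
      rw [wrap_add_two]
    · show ustar u₀ (wrap p.1, wrap (p.2 + 2)) = ustar u₀ (wrap p.1, wrap p.2)
      rw [wrap_add_two]
  · -- Euler–Lagrange equation
    intro φ hφ _
    set w : ℝ × ℝ → ℝ × ℝ := fun p => ustar u₀ (wrap p.1, wrap p.2) with hwdef
    have hwG : ∀ p ∈ Gstar, w p = ustar u₀ p := by
      rintro p ⟨h1, h2⟩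
      show ustar u₀ (wrap p.1, wrap p.2) = ustar u₀ p
      rw [wrap_eq_self h1, wrap_eq_self h2]
    have hW1 : Set.EqOn w (Rm 0 1 0 1 u₀) (I2 ×ˢ I2) := fun p hp => by
      rw [hwG p (hQ1sub hp)]; exact hE1 hp
    have hW2 : Set.EqOn w (Rm 1 (-1) 0 1 u₀) (Set.Ioo (1/2:ℝ) (3/2) ×ˢ I2) := fun p hp => by
      rw [hwG p (hQ2sub hp)]; exact hE2 hp
    have hW3 : Set.EqOn w (Rm 0 1 1 (-1) u₀) (I2 ×ˢ Set.Ioo (1/2:ℝ) (3/2)) := fun p hp => by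
      rw [hwG p (hQ3sub hp)]; exact hE3 hp
    have hW4 : Set.EqOn w (Rm 1 (-1) 1 (-1) u₀)
        (Set.Ioo (1/2:ℝ) (3/2) ×ˢ Set.Ioo (1/2:ℝ) (3/2)) := fun p hp => by
      rw [hwG p (hQ4sub hp)]; exact hE4 hp
    have hφd : Differentiable ℝ φ := hφ.differentiable (by simp)
    by_cases hInt : IntegrableOn (fun p => mdot (eps φ p) (eps w p - Vstar V p)) Gstar volume
    · -- pointwise integrand equalities on G
      have hpt1 : ∀ x ∈ G, mdot (eps φ (Tm 0 1 0 1 x)) (eps w (Tm 0 1 0 1 x)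
          - Vstar V (Tm 0 1 0 1 x)) = mdot (eps (Rm 0 1 0 1 φ) x) (eps u₀ x - V x) :=
        fun x hx => integrand_eq hO1 hO1 hJlo hJlo hOlo hOlo u₀ w φ V hW1 hx (hu₀ x hx) hφd
      have hpt2 : ∀ x ∈ G, mdot (eps φ (Tm 1 (-1) 0 1 x)) (eps w (Tm 1 (-1) 0 1 x)
          - Vstar V (Tm 1 (-1) 0 1 x)) = mdot (eps (Rm 1 (-1) 0 1 φ) x) (eps u₀ x - V x) :=
        fun x hx => integrand_eq hO2 hO1 hJhi hJlo hOhi hOlo u₀ w φ V hW2 hx (hu₀ x hx) hφd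
      have hpt3 : ∀ x ∈ G, mdot (eps φ (Tm 0 1 1 (-1) x)) (eps w (Tm 0 1 1 (-1) x)
          - Vstar V (Tm 0 1 1 (-1) x)) = mdot (eps (Rm 0 1 1 (-1) φ) x) (eps u₀ x - V x) :=
        fun x hx => integrand_eq hO1 hO2 hJlo hJhi hOlo hOhi u₀ w φ V hW3 hx (hu₀ x hx) hφd
      have hpt4 : ∀ x ∈ G, mdot (eps φ (Tm 1 (-1) 1 (-1) x)) (eps w (Tm 1 (-1) 1 (-1) x)
          - Vstar V (Tm 1 (-1) 1 (-1) x)) = mdot (eps (Rm 1 (-1) 1 (-1) φ) x) (eps u₀ x - V x) :=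
        fun x hx => integrand_eq hO2 hO2 hJhi hJhi hOhi hOhi u₀ w φ V hW4 hx (hu₀ x hx) hφd
      -- integrability of the pulled-back integrands
      have hg1 : IntegrableOn (fun x => mdot (eps (Rm 0 1 0 1 φ) x) (eps u₀ x - V x)) G volume :=
        (((integrableOn_Q_iff hO1 hO1 hJlo hJlo _).mp (hInt.mono_set hQ1sub)).congr_fun
          hpt1 measurableSet_G)
      have hg2 : IntegrableOn (fun x => mdot (eps (Rm 1 (-1) 0 1 φ) x) (eps u₀ x - V x)) G volume :=
        (((integrableOn_Q_iff hO2 hO1 hJhi hJlo _).mp (hInt.mono_set hQ2sub)).congr_fun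
          hpt2 measurableSet_G)
      have hg3 : IntegrableOn (fun x => mdot (eps (Rm 0 1 1 (-1) φ) x) (eps u₀ x - V x)) G volume :=
        (((integrableOn_Q_iff hO1 hO2 hJlo hJhi _).mp (hInt.mono_set hQ3sub)).congr_fun
          hpt3 measurableSet_G)
      have hg4 : IntegrableOn (fun x => mdot (eps (Rm 1 (-1) 1 (-1) φ) x) (eps u₀ x - V x)) G volume :=
        (((integrableOn_Q_iff hO2 hO2 hJhi hJhi _).mp (hInt.mono_set hQ4sub)).congr_fun
          hpt4 measurableSet_G)
      -- integrals over each quadrant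
      have hi1 : (∫ p in I2 ×ˢ I2, mdot (eps φ p) (eps w p - Vstar V p)) =
          ∫ x in G, mdot (eps (Rm 0 1 0 1 φ) x) (eps u₀ x - V x) := by
        rw [setIntegral_Q hO1 hO1 hJlo hJlo]
        exact setIntegral_congr_fun measurableSet_G hpt1
      have hi2 : (∫ p in Set.Ioo (1/2:ℝ) (3/2) ×ˢ I2, mdot (eps φ p) (eps w p - Vstar V p)) =
          ∫ x in G, mdot (eps (Rm 1 (-1) 0 1 φ) x) (eps u₀ x - V x) := by
        rw [setIntegral_Q hO2 hO1 hJhi hJlo]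
        exact setIntegral_congr_fun measurableSet_G hpt2
      have hi3 : (∫ p in I2 ×ˢ Set.Ioo (1/2:ℝ) (3/2), mdot (eps φ p) (eps w p - Vstar V p)) =
          ∫ x in G, mdot (eps (Rm 0 1 1 (-1) φ) x) (eps u₀ x - V x) := by
        rw [setIntegral_Q hO1 hO2 hJlo hJhi]
        exact setIntegral_congr_fun measurableSet_G hpt3
      have hi4 : (∫ p in Set.Ioo (1/2:ℝ) (3/2) ×ˢ Set.Ioo (1/2:ℝ) (3/2),
          mdot (eps φ p) (eps w p - Vstar V p)) =
          ∫ x in G, mdot (eps (Rm 1 (-1) 1 (-1) φ) x) (eps u₀ x - V x) := by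
        rw [setIntegral_Q hO2 hO2 hJhi hJhi]
        exact setIntegral_congr_fun measurableSet_G hpt4
      -- the combined test function
      have hΨ : ContDiff ℝ (⊤ : ℕ∞) (fun y => Rm 0 1 0 1 φ y + Rm 1 (-1) 0 1 φ y +
          Rm 0 1 1 (-1) φ y + Rm 1 (-1) 1 (-1) φ y) :=
        (((Rm_contDiff hφ).add (Rm_contDiff hφ)).add (Rm_contDiff hφ)).add (Rm_contDiff hφ)
      have hRd : ∀ a₁ e₁ a₂ e₂ : ℝ, Differentiable ℝ (Rm a₁ e₁ a₂ e₂ φ) := fun a₁ e₁ a₂ e₂ =>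
        (Rm_contDiff (a₁ := a₁) (e₁ := e₁) (a₂ := a₂) (e₂ := e₂) hφ).differentiable (by simp)
      have hEL0 := hEL _ hΨ
      have e0 : (∫ x in G, mdot (eps (fun y => Rm 0 1 0 1 φ y + Rm 1 (-1) 0 1 φ y +
          Rm 0 1 1 (-1) φ y + Rm 1 (-1) 1 (-1) φ y) x) (eps u₀ x - V x)) =
          ∫ x in G, (mdot (eps (Rm 0 1 0 1 φ) x) (eps u₀ x - V x) +
            mdot (eps (Rm 1 (-1) 0 1 φ) x) (eps u₀ x - V x) +
            mdot (eps (Rm 0 1 1 (-1) φ) x) (eps u₀ x - V x) +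
            mdot (eps (Rm 1 (-1) 1 (-1) φ) x) (eps u₀ x - V x)) :=
        setIntegral_congr_fun measurableSet_G (fun x _ =>
          mdot_eps_add4 _ _ _ _ (hRd _ _ _ _) (hRd _ _ _ _) (hRd _ _ _ _) (hRd _ _ _ _) x _)
      have hA : (∫ x in G, (mdot (eps (Rm 0 1 0 1 φ) x) (eps u₀ x - V x) +
            mdot (eps (Rm 1 (-1) 0 1 φ) x) (eps u₀ x - V x))) =
          (∫ x in G, mdot (eps (Rm 0 1 0 1 φ) x) (eps u₀ x - V x)) +
          (∫ x in G, mdot (eps (Rm 1 (-1) 0 1 φ) x) (eps u₀ x - V x)) := integral_add hg1 hg2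
      have hB : (∫ x in G, (mdot (eps (Rm 0 1 0 1 φ) x) (eps u₀ x - V x) +
            mdot (eps (Rm 1 (-1) 0 1 φ) x) (eps u₀ x - V x) +
            mdot (eps (Rm 0 1 1 (-1) φ) x) (eps u₀ x - V x))) =
          (∫ x in G, (mdot (eps (Rm 0 1 0 1 φ) x) (eps u₀ x - V x) +
            mdot (eps (Rm 1 (-1) 0 1 φ) x) (eps u₀ x - V x))) +
          (∫ x in G, mdot (eps (Rm 0 1 1 (-1) φ) x) (eps u₀ x - V x)) :=
        integral_add (hg1.add hg2) hg3
      have hC : (∫ x in G, (mdot (eps (Rm 0 1 0 1 φ) x) (eps u₀ x - V x) +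
            mdot (eps (Rm 1 (-1) 0 1 φ) x) (eps u₀ x - V x) +
            mdot (eps (Rm 0 1 1 (-1) φ) x) (eps u₀ x - V x) +
            mdot (eps (Rm 1 (-1) 1 (-1) φ) x) (eps u₀ x - V x))) =
          (∫ x in G, (mdot (eps (Rm 0 1 0 1 φ) x) (eps u₀ x - V x) +
            mdot (eps (Rm 1 (-1) 0 1 φ) x) (eps u₀ x - V x) +
            mdot (eps (Rm 0 1 1 (-1) φ) x) (eps u₀ x - V x))) +
          (∫ x in G, mdot (eps (Rm 1 (-1) 1 (-1) φ) x) (eps u₀ x - V x)) :=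
        integral_add ((hg1.add hg2).add hg3) hg4
      have hsum : (0:ℝ) =
          (∫ x in G, mdot (eps (Rm 0 1 0 1 φ) x) (eps u₀ x - V x)) +
          (∫ x in G, mdot (eps (Rm 1 (-1) 0 1 φ) x) (eps u₀ x - V x)) +
          (∫ x in G, mdot (eps (Rm 0 1 1 (-1) φ) x) (eps u₀ x - V x)) +
          (∫ x in G, mdot (eps (Rm 1 (-1) 1 (-1) φ) x) (eps u₀ x - V x)) := by
        calc (0:ℝ) = ∫ x in G, (mdot (eps (Rm 0 1 0 1 φ) x) (eps u₀ x - V x) +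
            mdot (eps (Rm 1 (-1) 0 1 φ) x) (eps u₀ x - V x) +
            mdot (eps (Rm 0 1 1 (-1) φ) x) (eps u₀ x - V x) +
            mdot (eps (Rm 1 (-1) 1 (-1) φ) x) (eps u₀ x - V x)) := (e0.symm.trans hEL0).symm
          _ = _ := by rw [hC, hB, hA]
      -- assemble
      have hIQ1 := hInt.mono_set hQ1sub
      have hIQ2 := hInt.mono_set hQ2sub
      have hIQ3 := hInt.mono_set hQ3sub
      have hIQ4 := hInt.mono_set hQ4sub
      calc (∫ p in Gstar, mdot (eps φ p) (eps w p - Vstar V p))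
          = ∫ p in ((I2 ×ˢ I2 ∪ Set.Ioo (1/2:ℝ) (3/2) ×ˢ I2) ∪
              (I2 ×ˢ Set.Ioo (1/2:ℝ) (3/2) ∪ Set.Ioo (1/2:ℝ) (3/2) ×ˢ Set.Ioo (1/2:ℝ) (3/2))),
              mdot (eps φ p) (eps w p - Vstar V p) := setIntegral_congr_set haeeq
        _ = (∫ p in I2 ×ˢ I2 ∪ Set.Ioo (1/2:ℝ) (3/2) ×ˢ I2,
              mdot (eps φ p) (eps w p - Vstar V p)) +
            (∫ p in I2 ×ˢ Set.Ioo (1/2:ℝ) (3/2) ∪ Set.Ioo (1/2:ℝ) (3/2) ×ˢ Set.Ioo (1/2:ℝ) (3/2),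
              mdot (eps φ p) (eps w p - Vstar V p)) :=
            setIntegral_union hdU (mQ3.union mQ4) (hIQ1.union hIQ2) (hIQ3.union hIQ4)
        _ = ((∫ p in I2 ×ˢ I2, mdot (eps φ p) (eps w p - Vstar V p)) +
            (∫ p in Set.Ioo (1/2:ℝ) (3/2) ×ˢ I2, mdot (eps φ p) (eps w p - Vstar V p))) +
            ((∫ p in I2 ×ˢ Set.Ioo (1/2:ℝ) (3/2), mdot (eps φ p) (eps w p - Vstar V p)) +
            (∫ p in Set.Ioo (1/2:ℝ) (3/2) ×ˢ Set.Ioo (1/2:ℝ) (3/2),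
              mdot (eps φ p) (eps w p - Vstar V p))) := by
            rw [setIntegral_union hd12 mQ2 hIQ1 hIQ2, setIntegral_union hd34 mQ4 hIQ3 hIQ4]
        _ = 0 := by
            rw [hi1, hi2, hi3, hi4]
            linarith [hsum]
    · exact integral_undef hInt
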